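/- Let F be a finite field with 2 elements, let W be a Weierstrass curve over F with nonzero discriminant (an elliptic curve), and let L be a field extension of F of degree 3. If the number of points of W over F (including the point at infinity) equals the number of points of the base change of W to L, then that common number of points equals 4 or 5. -/
import Mathlib
structure F8 : Type where
  c0 : Bool
  c1 : Bool
  c2 : Bool
deriving DecidableEq, Fintype

namespace F8

def mul (a b : F8) : F8 :=
  ⟨xor (a.c0 && b.c0) (xor (a.c1 && b.c2) (a.c2 && b.c1)),
   xor (a.c0 && b.c1) (xor (a.c1 && b.c0) (xor (a.c1 && b.c2) (xor (a.c2 && b.c1) (a.c2 && b.c2)))),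
   xor (a.c0 && b.c2) (xor (a.c1 && b.c1) (xor (a.c2 && b.c0) (a.c2 && b.c2)))⟩

instance : Zero F8 := ⟨⟨false,false,false⟩⟩
instance : One F8 := ⟨⟨true,false,false⟩⟩
instance : Add F8 := ⟨fun a b => ⟨xor a.c0 b.c0, xor a.c1 b.c1, xor a.c2 b.c2⟩⟩
instance : Neg F8 := ⟨id⟩
instance : Mul F8 := ⟨mul⟩

def natCast : ℕ → F8 := fun n => if n % 2 = 1 then 1 else 0
def intCast : ℤ → F8 := fun n => if n % 2 = 1 then 1 else 0

lemma natCast_succ (n : ℕ) : natCast (n + 1) = natCast n + 1 := by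
  unfold natCast
  rcases Nat.even_or_odd n with h | h
  · have h1 : n % 2 = 0 := Nat.even_iff.mp h
    have h2 : (n+1) % 2 = 1 := by omega
    rw [h1, h2]; decide
  · have h1 : n % 2 = 1 := Nat.odd_iff.mp h
    have h2 : (n+1) % 2 = 0 := by omega
    rw [h1, h2]; decide

set_option maxHeartbeats 1000000 in
instance : CommRing F8 where
  add := (· + ·)
  add_assoc := by decide
  zero := 0
  zero_add := by decide
  add_zero := by decide
  nsmul := nsmulRec
  add_comm := by decide
  mul := (· * ·)
  left_distrib := by decide
  right_distrib := by decide
  zero_mul := by decide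
  mul_zero := by decide
  mul_assoc := by decide
  one := 1
  one_mul := by decide
  mul_one := by decide
  neg := Neg.neg
  zsmul := zsmulRec
  neg_add_cancel := by decide
  mul_comm := by decide
  natCast := natCast
  natCast_zero := by decide
  natCast_succ := natCast_succ
  intCast := intCast
  intCast_ofNat := fun n => by
    show intCast n = natCast n
    unfold intCast natCast
    rcases Nat.even_or_odd n with h | h
    · have h1 : n % 2 = 0 := Nat.even_iff.mp h
      have h2 : (n : ℤ) % 2 = 0 := by omega
      simp [h1, h2]
    · have h1 : n % 2 = 1 := Nat.odd_iff.mp h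
      have h2 : (n : ℤ) % 2 = 1 := by omega
      simp [h1, h2]
  intCast_negSucc := fun n => by
    show intCast _ = -(natCast (n+1))
    unfold intCast natCast
    have hneg : -(n+1 : ℤ) = Int.negSucc n := rfl
    rcases Nat.even_or_odd n with h | h
    · have h1 : (n+1) % 2 = 1 := by have := Nat.even_iff.mp h; omega
      have h2 : (Int.negSucc n) % 2 = 1 := by
        rw [Int.negSucc_eq]; omega
      simp [h1, h2]; decide
    · have h1 : (n+1) % 2 = 0 := by have := Nat.odd_iff.mp h; omega
      have h2 : (Int.negSucc n) % 2 = 0 := by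
        rw [Int.negSucc_eq]; omega
      simp [h1, h2]; decide

end F8

namespace F8
instance : Inv F8 := ⟨fun a => mul (mul a a) (mul (mul a a) (mul a a))⟩

set_option maxHeartbeats 1000000 in
instance : Field F8 where
  inv := Inv.inv
  exists_pair_ne := ⟨0, 1, by decide⟩
  mul_inv_cancel := by decide
  inv_zero := by decide
  nnqsmul := _
  qsmul := _

def g : ZMod 2 →+* F8 where
  toFun a := ⟨a = 1, false, false⟩
  map_one' := rfl
  map_mul' := by decide
  map_zero' := rfl
  map_add' := by decide
end F8

open F8 in
set_option maxHeartbeats 4000000 in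
lemma key (a1 a2 a3 a4 a6 : ZMod 2)
    (hΔ : (⟨a1, a2, a3, a4, a6⟩ : WeierstrassCurve (ZMod 2)).Δ ≠ 0)
    (h : Fintype.card {p : ZMod 2 × ZMod 2 //
          p.2 ^ 2 + a1 * p.1 * p.2 + a3 * p.2 = p.1 ^ 3 + a2 * p.1 ^ 2 + a4 * p.1 + a6}
        = Fintype.card {p : F8 × F8 //
          p.2 ^ 2 + g a1 * p.1 * p.2 + g a3 * p.2 = p.1 ^ 3 + g a2 * p.1 ^ 2 + g a4 * p.1 + g a6}) :
    Fintype.card {p : ZMod 2 × ZMod 2 //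
          p.2 ^ 2 + a1 * p.1 * p.2 + a3 * p.2 = p.1 ^ 3 + a2 * p.1 ^ 2 + a4 * p.1 + a6} = 3 ∨
    Fintype.card {p : ZMod 2 × ZMod 2 //
          p.2 ^ 2 + a1 * p.1 * p.2 + a3 * p.2 = p.1 ^ 3 + a2 * p.1 ^ 2 + a4 * p.1 + a6} = 4 := by
  revert hΔ h; revert a1 a2 a3 a4 a6; decide

/-- The `(q,m) = (2,3)` row of the genus-one classification: if `W` is an elliptic curve
(a Weierstrass curve with nonzero discriminant) over a field `F` with `2` elements,
`L/F` has degree `3`, and `W` has the same number of points (affine solutions plus the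
point at infinity) over `F` and over `L`, then that common number of points is `4` or `5`. -/
theorem genus_one_DS_q2_m3 (F : Type*) [Field F] [Fintype F]
    (hF : Fintype.card F = 2) (W : WeierstrassCurve F) (hΔ : W.Δ ≠ 0)
    (L : Type*) [Field L] [Algebra F L] (hdeg : Module.finrank F L = 3)
    (hN : Nat.card {p : F × F // W.toAffine.Equation p.1 p.2} + 1 =
          Nat.card {p : L × L // (W.baseChange L).toAffine.Equation p.1 p.2} + 1) :
    Nat.card {p : F × F // W.toAffine.Equation p.1 p.2} + 1 = 4 ∨
    Nat.card {p : F × F // W.toAffine.Equation p.1 p.2} + 1 = 5 := by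
  have hFin : Module.Finite F L := Module.finite_of_finrank_eq_succ (n := 2) (by rw [hdeg])
  have hLfin : Finite L := Module.finite_of_finite F
  cases nonempty_fintype L
  have hcardL : Fintype.card L = 8 := by
    rw [Module.card_eq_pow_finrank (K := F) (V := L), hF, hdeg]; norm_num
  have hF2 : Fintype.card F = Fintype.card (ZMod 2) := by rw [hF, ZMod.card]
  have hL8 : Fintype.card L = Fintype.card F8 := by rw [hcardL]; decide
  let e : F ≃+* ZMod 2 := FiniteField.ringEquivOfCardEq hF2
  let e' : L ≃+* F8 := FiniteField.ringEquivOfCardEq hL8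
  -- every element of F is 0 or 1
  have hx : ∀ x : F, x = 0 ∨ x = 1 := by
    intro x
    have hz : ∀ z : ZMod 2, z = 0 ∨ z = 1 := by decide
    rcases hz (e x) with h | h
    · left; have := congrArg e.symm h; simpa using this
    · right; have := congrArg e.symm h; simpa using this
  set W₂ : WeierstrassCurve (ZMod 2) := W.map e.toRingHom with hW₂
  have hΔ₂ : W₂.Δ ≠ 0 := by
    rw [hW₂, WeierstrassCurve.map_Δ]
    intro h
    exact hΔ (by simpa using e.injective (by simpa using h))
  have hcomp : e'.toRingHom.comp (algebraMap F L) = F8.g.comp e.toRingHom := by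
    ext x
    rcases hx x with rfl | rfl <;> simp
  have hmap : (W.baseChange L).map e'.toRingHom = W₂.map F8.g := by
    rw [hW₂, WeierstrassCurve.baseChange, WeierstrassCurve.map_map, WeierstrassCurve.map_map,
      hcomp]
  -- transport the count over F to ZMod 2
  have h1 : Nat.card {p : F × F // W.toAffine.Equation p.1 p.2}
      = Nat.card {p : ZMod 2 × ZMod 2 // W₂.toAffine.Equation p.1 p.2} := by
    apply Nat.card_congr
    exact (Equiv.prodCongr e.toEquiv e.toEquiv).subtypeEquiv fun p =>
      (WeierstrassCurve.Affine.map_equation (W := W.toAffine) e.injective p.1 p.2).symm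
  -- transport the count over L to F8
  have h2 : Nat.card {p : L × L // (W.baseChange L).toAffine.Equation p.1 p.2}
      = Nat.card {p : F8 × F8 // (W₂.map F8.g).toAffine.Equation p.1 p.2} := by
    apply Nat.card_congr
    refine (Equiv.prodCongr e'.toEquiv e'.toEquiv).subtypeEquiv fun p => ?_
    rw [← hmap]
    exact (WeierstrassCurve.Affine.map_equation
      (W := (W.baseChange L).toAffine) e'.injective p.1 p.2).symm
  -- rewrite Equation subtypes as decidable arithmetic subtypes
  have h3 : Nat.card {p : ZMod 2 × ZMod 2 // W₂.toAffine.Equation p.1 p.2}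
      = Fintype.card {p : ZMod 2 × ZMod 2 //
          p.2 ^ 2 + W₂.a₁ * p.1 * p.2 + W₂.a₃ * p.2
            = p.1 ^ 3 + W₂.a₂ * p.1 ^ 2 + W₂.a₄ * p.1 + W₂.a₆} := by
    rw [← Nat.card_eq_fintype_card]
    exact Nat.card_congr (Equiv.subtypeEquivRight fun p =>
      WeierstrassCurve.Affine.equation_iff (W := W₂.toAffine) p.1 p.2)
  have h4 : Nat.card {p : F8 × F8 // (W₂.map F8.g).toAffine.Equation p.1 p.2}
      = Fintype.card {p : F8 × F8 //
          p.2 ^ 2 + F8.g W₂.a₁ * p.1 * p.2 + F8.g W₂.a₃ * p.2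
            = p.1 ^ 3 + F8.g W₂.a₂ * p.1 ^ 2 + F8.g W₂.a₄ * p.1 + F8.g W₂.a₆} := by
    rw [← Nat.card_eq_fintype_card]
    exact Nat.card_congr (Equiv.subtypeEquivRight fun p =>
      WeierstrassCurve.Affine.equation_iff (W := (W₂.map F8.g).toAffine) p.1 p.2)
  rw [h1, h2, h3, h4] at hN
  rw [h1, h3]
  have := key W₂.a₁ W₂.a₂ W₂.a₃ W₂.a₄ W₂.a₆ hΔ₂ (by omega)
  omega
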